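/- arXiv:1809.05799 — 2 statements merged into one kernel-verified Lean document; each statement's English description precedes it below -/
import Mathlib

section
/- In the space X of nondecreasing functions from ω₂ to ω₁ + 1, the family consisting of the sets A_α = { x : x(α) = ω₁ } (α < ω₂) and A^ξ = { x : ∀β, x(β) ≤ ξ } (ξ < ω₁) covers X, and every countable subfamily is contained in a set of the form A_α ∪ A^ξ. -/
open Ordinal Cardinal

noncomputable section

def omega1 : Ordinal := (aleph 1).ord
def omega2 : Ordinal := (aleph 2).ord

abbrev Idx := {β : Ordinal // β < omega2}
abbrev Val := {γ : Ordinal // γ ≤ omega1}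

instance : TopologicalSpace Val := Preorder.topology Val
instance : OrderTopology Val := ⟨rfl⟩

/-- The Kunen–van Mill–Mills space: nondecreasing functions from ω₂ to ω₁ + 1. -/
def KvMM : Set (Idx → Val) := {x | ∀ a b : Idx, a ≤ b → x a ≤ x b}

def wTop : Val := ⟨omega1, le_rfl⟩

/-- `A_α = { x : x(α) = ω₁ }`. -/
def Aα (α : Idx) : Set KvMM := {x | (x : Idx → Val) α = wTop}

/-- `A^ξ = { x : ∀ β, x(β) ≤ ξ }` for `ξ < ω₁`. -/
def Aup (ξ : {ξ : Ordinal // ξ < omega1}) : Set KvMM :=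
  {x | ∀ β : Idx, (x : Idx → Val) β ≤ ⟨ξ.1, ξ.2.le⟩}

/-!
If x lies in no `A^ξ`, then for each ζ < ω₁ some coordinate of x exceeds ζ. These ℵ₁ coordinates
are bounded below ω₂ because cf ω₂ = ℵ₂, and by monotonicity x takes the value ω₁ at the bound.
For the second claim, `A_α` and `A^ξ` grow with α and ξ, and a countable family of indices is
bounded below ω₂, and one of levels below ω₁, since both have uncountable cofinality.
-/

namespace Ordinal

theorem exists_forall_le_of_lift_mk_lt_cof {ι : Type v} {f : ι → Ordinal.{u}} {a : Ordinal.{u}}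
    (hι : Cardinal.lift.{u} #ι < (lift.{v} a).cof) (hf : ∀ i, f i < a) :
    ∃ b < a, ∀ i, f i ≤ b :=
  ⟨⨆ i, f i, lift_iSup_lt_of_lt_cof hι hf,
    le_ciSup ⟨a, Set.forall_mem_range.2 fun i ↦ (hf i).le⟩⟩

theorem exists_forall_le_of_card_lt_cof {c : Ordinal.{v}} {f : Set.Iio c → Ordinal.{u}}
    {a : Ordinal.{u}} (hc : Cardinal.lift.{u} c.card < Cardinal.lift.{v} a.cof)
    (hf : ∀ i, f i < a) : ∃ b < a, ∀ i, f i ≤ b :=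
  exists_forall_le_of_lift_mk_lt_cof (by
    simpa [Cardinal.mk_Iio_ordinal, ← lift_cof, ← lift_card] using
      Cardinal.lift_lt.{max u v, v + 1}.2 hc) hf

theorem exists_forall_le_of_aleph0_lt_cof {f : ℕ → Ordinal.{u}} {a : Ordinal.{u}}
    (ha : ℵ₀ < a.cof) (hf : ∀ n, f n < a) : ∃ b < a, ∀ n, f n ≤ b :=
  exists_forall_le_of_lift_mk_lt_cof (by simpa) hf

theorem exists_le_apply_of_monotone_of_card_lt_cof {a : Ordinal.{u}} {c : Ordinal.{v}}
    (hca : Cardinal.lift.{u} c.card < Cardinal.lift.{v} a.cof) {x : Set.Iio a → Ordinal.{v}}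
    (hx : Monotone x) (hxc : ∀ ζ < c, ∃ β, ζ < x β) : ∃ β, c ≤ x β := by
  choose β hβ using fun ζ : Set.Iio c ↦ hxc ζ ζ.2
  obtain ⟨b, hba, hb⟩ := exists_forall_le_of_card_lt_cof (f := fun ζ ↦ (β ζ).1) hca
    fun ζ ↦ (β ζ).2
  exact ⟨⟨b, hba⟩, le_of_forall_lt fun ζ hζ ↦ (hβ ⟨ζ, hζ⟩).trans_le (hx (hb ⟨ζ, hζ⟩))⟩

end Ordinal

theorem card_omega1 : omega1.card = ℵ₁ := card_ord _

theorem cof_omega1 : omega1.cof = ℵ₁ := by simp [omega1]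

theorem cof_omega2 : omega2.cof = ℵ_ 2 := by
  simpa [omega2, one_add_one_eq_two] using (isRegular_aleph_add_one 1).cof_omega_eq

theorem Aα_mono : Monotone Aα := fun _ _ hαβ x hx ↦
  le_antisymm (x.1 _).2 (hx ▸ x.2 _ _ hαβ)

theorem Aup_mono : Monotone Aup := fun _ _ hξη _ hx β ↦ (hx β).trans hξη

theorem notMem_Aup_iff {x : KvMM} {ξ : {ξ : Ordinal // ξ < omega1}} :
    x ∉ Aup ξ ↔ ∃ β, ξ.1 < ((x : Idx → Val) β).1 := by
  simp only [Aup, Set.mem_ofPred_eq, not_forall, not_le]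
  rfl

theorem KvMM_cover_and_countable_subfamilies :
    (∀ x : KvMM, (∃ α : Idx, x ∈ Aα α) ∨ (∃ ξ : {ξ : Ordinal // ξ < omega1}, x ∈ Aup ξ)) ∧
    (∀ (g : ℕ → Idx) (h : ℕ → {ξ : Ordinal // ξ < omega1}),
      ∃ α : Idx, ∃ ξ : {ξ : Ordinal // ξ < omega1},
        ∀ n : ℕ, Aα (g n) ⊆ Aα α ∪ Aup ξ ∧ Aup (h n) ⊆ Aα α ∪ Aup ξ) := by
  refine ⟨fun x ↦ or_iff_not_imp_right.2 fun hx ↦ ?_, fun g h ↦ ?_⟩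
  · push Not at hx
    have hmono : Monotone fun β : Idx ↦ ((x : Idx → Val) β).1 := fun _ _ hαβ ↦ x.2 _ _ hαβ
    obtain ⟨β, hβ⟩ := Ordinal.exists_le_apply_of_monotone_of_card_lt_cof
      (by simp [card_omega1, cof_omega2]) hmono fun ζ hζ ↦ notMem_Aup_iff.1 (hx ⟨ζ, hζ⟩)
    exact ⟨β, Subtype.ext (le_antisymm ((x : Idx → Val) β).2 hβ)⟩
  · obtain ⟨α, hα, hgα⟩ := Ordinal.exists_forall_le_of_aleph0_lt_cof
      (cof_omega2 ▸ aleph0_lt_aleph_one.trans (aleph_lt_aleph.2 one_lt_two)) fun n ↦ (g n).2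
    obtain ⟨ξ, hξ, hhξ⟩ := Ordinal.exists_forall_le_of_aleph0_lt_cof
      (cof_omega1 ▸ aleph0_lt_aleph_one) fun n ↦ (h n).2
    exact ⟨⟨α, hα⟩, ⟨ξ, hξ⟩, fun n ↦ ⟨(Aα_mono (hgα n)).trans Set.subset_union_left,
      (Aup_mono (hhξ n)).trans Set.subset_union_right⟩⟩

end
end

section
/- Let π : K → X be a continuous surjection between compact Hausdorff spaces, with K extremally disconnected. If A ⊆ X is a closed P-set in X, then π⁻¹(A) is a closed P-set in K. -/
/-! Since `π` is a closed map, for a Gδ-set `G = ⋂ Uₙ ⊇ π⁻¹(A)` the set of points whose whole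
fibre lies in `G` is `⋂ (π(Uₙᶜ))ᶜ`, a Gδ-set containing `A`. Its interior is a neighbourhood
of `A`, and the preimage of that interior is an open set between `π⁻¹(A)` and `G`. -/

/-- A set `S` is a P-set if every Gδ-set containing `S` is a neighbourhood of `S`. -/
def IsPSet {Y : Type*} [TopologicalSpace Y] (S : Set Y) : Prop :=
  ∀ G : Set Y, IsGδ G → S ⊆ G → S ⊆ interior G

lemma setOf_preimage_singleton_subset_eq_compl_image_compl {X Y : Type*} (f : X → Y)
    (s : Set X) : {y | f ⁻¹' {y} ⊆ s} = (f '' sᶜ)ᶜ := by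
  ext y
  simp [Set.subset_def, not_imp_not]

section

variable {X Y : Type*} [TopologicalSpace X] [TopologicalSpace Y] {f : X → Y}

lemma IsClosedMap.isOpen_setOf_preimage_singleton_subset (hf : IsClosedMap f) {U : Set X}
    (hU : IsOpen U) : IsOpen {y | f ⁻¹' {y} ⊆ U} := by
  rw [setOf_preimage_singleton_subset_eq_compl_image_compl]
  exact (hf _ hU.isClosed_compl).isOpen_compl

lemma IsClosedMap.isGδ_setOf_preimage_singleton_subset (hf : IsClosedMap f) {G : Set X}
    (hG : IsGδ G) : IsGδ {y | f ⁻¹' {y} ⊆ G} := by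
  obtain ⟨T, hT_open, hT_count, rfl⟩ := hG
  have h_eq : {y | f ⁻¹' {y} ⊆ ⋂₀ T} = ⋂ U ∈ T, {y | f ⁻¹' {y} ⊆ U} := by
    ext y
    simp only [Set.mem_ofPred_eq, Set.subset_sInter_iff, Set.mem_iInter]
  rw [h_eq]
  exact .biInter hT_count fun U hU ↦
    (hf.isOpen_setOf_preimage_singleton_subset (hT_open U hU)).isGδ

lemma IsPSet.preimage (hf : Continuous f) (hf_closed : IsClosedMap f) {A : Set Y}
    (hA : IsPSet A) : IsPSet (f ⁻¹' A) := by
  intro G hG hAG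
  set V := {y | f ⁻¹' {y} ⊆ G}
  have hAV : A ⊆ V := fun a ha x hx ↦ hAG (show f x ∈ A from hx ▸ ha)
  have h_nhds : f ⁻¹' A ⊆ f ⁻¹' interior V :=
    Set.preimage_mono (hA V (hf_closed.isGδ_setOf_preimage_singleton_subset hG) hAV)
  refine h_nhds.trans (interior_maximal ?_ (isOpen_interior.preimage hf))
  exact (Set.preimage_mono interior_subset).trans fun _ hx ↦ hx rfl

end

theorem preimage_pset_of_extremally_disconnected_general
    {K X : Type*} [TopologicalSpace K] [CompactSpace K]
    [TopologicalSpace X] [T2Space X]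
    (π : K → X) (hcont : Continuous π)
    {A : Set X} (hA : IsClosed A) (hP : IsPSet A) :
    IsClosed (π ⁻¹' A) ∧ IsPSet (π ⁻¹' A) :=
  ⟨hA.preimage hcont, hP.preimage hcont hcont.isClosedMap⟩

theorem preimage_pset_of_extremally_disconnected
    {K X : Type*} [TopologicalSpace K] [CompactSpace K] [T2Space K]
    [ExtremallyDisconnected K]
    [TopologicalSpace X] [CompactSpace X] [T2Space X]
    (π : K → X) (hcont : Continuous π) (hsurj : Function.Surjective π)
    {A : Set X} (hA : IsClosed A) (hP : IsPSet A) :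
    IsClosed (π ⁻¹' A) ∧ IsPSet (π ⁻¹' A) :=
  preimage_pset_of_extremally_disconnected_general π hcont hA hP
end
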